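/- For a positive trace class operator S on H and any bounded operator X, trace(X*XS) = sup{ |trace(X*AS)|² : A finite rank, trace(A*AS) ≤ 1 }. -/

import Mathlib

open scoped ComplexOrder InnerProductSpace
noncomputable section

variable (H : Type*) [NormedAddCommGroup H] [InnerProductSpace ℂ H] [CompleteSpace H]

/-- The index set of a fixed Hilbert (orthonormal) basis of `H`. -/
def stdIdx : Set H := (exists_hilbertBasis ℂ H).choose

/-- A fixed Hilbert (orthonormal) basis of `H`. -/
def stdBasis : HilbertBasis (stdIdx H) ℂ H := (exists_hilbertBasis ℂ H).choose_spec.choose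

/-- `S` is a Hilbert–Schmidt operator. -/
def IsHilbertSchmidt (S : H →L[ℂ] H) : Prop :=
  Summable fun i => ‖S (stdBasis H i)‖ ^ 2

/-- `S` is a trace class operator: the product of two Hilbert–Schmidt operators. -/
def IsTraceClass (S : H →L[ℂ] H) : Prop :=
  ∃ B C : H →L[ℂ] H, IsHilbertSchmidt H B ∧ IsHilbertSchmidt H C ∧ S = B * C

/-- The trace of an operator, computed in the fixed basis. -/
def trace (S : H →L[ℂ] H) : ℂ := ∑' i, ⟪(stdBasis H i : H), S (stdBasis H i)⟫_ℂ

/-- A functional on `B(H)` is positive if `f (X⋆ X) ≥ 0` for all `X`. -/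
def IsPosFun (f : (H →L[ℂ] H) → ℂ) : Prop := ∀ X : H →L[ℂ] H, 0 ≤ f (star X * X)

/-- `X` has finite rank. -/
def IsFiniteRank (X : H →L[ℂ] H) : Prop := FiniteDimensional ℂ (LinearMap.range (X : H →ₗ[ℂ] H))

/-- A functional on `B(H)` is normal if it is represented by a trace class operator via the trace. -/
def IsNormalFn (f : (H →L[ℂ] H) → ℂ) : Prop :=
  ∃ F : H →L[ℂ] H, IsTraceClass H F ∧ ∀ X : H →L[ℂ] H, f X = trace H (X * F)

/-! With `T = √S`, which is Hilbert–Schmidt because `∑ ⟪eᵢ, S eᵢ⟫ = ∑ ‖T eᵢ‖²` is finite for a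
trace class `S`, cyclicity of the trace gives `trace (M⋆ A S) = ∑ᵢ ⟪M T eᵢ, A T eᵢ⟫`: the inner
product in `ℓ²(H)` of the columns of `M T` and `A T`. Cauchy–Schwarz bounds the supremum by the
squared Hilbert–Schmidt norm `‖X T‖₂² = trace (X⋆ X S)`, and the normalised finite-rank operators
`P_F X`, with `P_F` the projection onto finitely many basis vectors, attain the values
`‖P_F X T‖₂² → ‖X T‖₂²`. -/

open Filter Topology

namespace HilbertBasis

variable {𝕜 E ι κ : Type*} [RCLike 𝕜] [NormedAddCommGroup E] [InnerProductSpace 𝕜 E]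
  (b : HilbertBasis ι 𝕜 E)

theorem hasSum_norm_sq_inner (x : E) : HasSum (fun i => ‖⟪b i, x⟫_𝕜‖ ^ 2) (‖x‖ ^ 2) := by
  simpa only [ENNReal.toReal_ofNat, Real.rpow_two, LinearIsometryEquiv.norm_map,
    HilbertBasis.repr_apply_apply] using lp.hasSum_norm (p := 2) (by norm_num) (b.repr x)

theorem summable_norm_sq_inner_prod {u : κ → E} (hu : Summable fun k => ‖u k‖ ^ 2) :
    Summable fun p : κ × ι => ‖⟪b p.2, u p.1⟫_𝕜‖ ^ 2 := by
  rw [summable_prod_of_nonneg fun _ => by positivity]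
  exact ⟨fun k => (b.hasSum_norm_sq_inner (u k)).summable,
    hu.congr fun k => (b.hasSum_norm_sq_inner (u k)).tsum_eq.symm⟩

theorem hasSum_tsum_norm_sq_inner {u : κ → E} (hu : Summable fun k => ‖u k‖ ^ 2) :
    HasSum (fun i => ∑' k, ‖⟪b i, u k⟫_𝕜‖ ^ 2) (∑' k, ‖u k‖ ^ 2) := by
  have hs := b.summable_norm_sq_inner_prod hu
  have hcomm : ∑' i, ∑' k, ‖⟪b i, u k⟫_𝕜‖ ^ 2 = ∑' k, ‖u k‖ ^ 2 := by
    rw [hs.tsum_comm (f := fun k i => ‖⟪b i, u k⟫_𝕜‖ ^ 2)]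
    exact tsum_congr fun k => (b.hasSum_norm_sq_inner (u k)).tsum_eq
  exact hcomm ▸ hs.prod_symm.prod.hasSum

theorem tendsto_tsum_sum_norm_sq_inner {u : κ → E} (hu : Summable fun k => ‖u k‖ ^ 2) :
    Tendsto (fun F : Finset ι => ∑' k, ∑ i ∈ F, ‖⟪b i, u k⟫_𝕜‖ ^ 2) atTop
      (𝓝 (∑' k, ‖u k‖ ^ 2)) := by
  have hcol : ∀ i, Summable fun k => ‖⟪b i, u k⟫_𝕜‖ ^ 2 := fun i =>
    (b.summable_norm_sq_inner_prod hu).prod_symm.prod_factor i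
  simp_rw [Summable.tsum_finsetSum fun i _ => hcol i]
  exact b.hasSum_tsum_norm_sq_inner hu

end HilbertBasis

section InnerProductSpace

variable {𝕜 V : Type*} [RCLike 𝕜] [NormedAddCommGroup V] [InnerProductSpace 𝕜 V]

theorem norm_inner_smul_inv_norm_sq {x y : V} (h : ⟪x, y⟫_𝕜 = ⟪y, y⟫_𝕜) :
    ‖⟪x, (‖y‖⁻¹ : 𝕜) • y⟫_𝕜‖ ^ 2 = ‖y‖ ^ 2 := by
  rw [inner_smul_right, h, inner_self_eq_norm_sq_to_K, norm_mul, norm_pow, RCLike.norm_ofReal,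
    norm_inv, RCLike.norm_ofReal, abs_norm]
  rcases eq_or_ne ‖y‖ 0 with hy | hy
  · simp [hy]
  · field_simp

theorem norm_smul_inv_norm_le_one (y : V) : ‖(‖y‖⁻¹ : 𝕜) • y‖ ≤ 1 := by
  rcases eq_or_ne y 0 with rfl | hy
  · simp
  · exact (norm_smul_inv_norm hy).le

theorem sSup_norm_inner_sq_eq {M ι : Type*} [AddCommGroup M] [Module 𝕜 M] (Φ : M →ₗ[𝕜] V)
    {p : M → Prop} (hp : ∀ (c : 𝕜) {A}, p A → p (c • A)) (x : V) {l : Filter ι} [l.NeBot]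
    {A : ι → M} (hpA : ∀ i, p (A i)) (hxA : ∀ i, ⟪x, Φ (A i)⟫_𝕜 = ⟪Φ (A i), Φ (A i)⟫_𝕜)
    (hlim : Tendsto (fun i => ‖Φ (A i)‖ ^ 2) l (𝓝 (‖x‖ ^ 2))) :
    sSup {r : ℝ | ∃ A, p A ∧ ‖Φ A‖ ^ 2 ≤ 1 ∧ r = ‖⟪x, Φ A⟫_𝕜‖ ^ 2} = ‖x‖ ^ 2 := by
  set E := {r : ℝ | ∃ A, p A ∧ ‖Φ A‖ ^ 2 ≤ 1 ∧ r = ‖⟪x, Φ A⟫_𝕜‖ ^ 2}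
  have hmem (i : ι) : ‖Φ (A i)‖ ^ 2 ∈ E := by
    refine ⟨(‖Φ (A i)‖⁻¹ : 𝕜) • A i, hp _ (hpA i), ?_, ?_⟩
    · rw [map_smul]
      exact pow_le_one₀ (norm_nonneg _) (norm_smul_inv_norm_le_one _)
    · rw [map_smul, norm_inner_smul_inv_norm_sq (hxA i)]
  have hub : ‖x‖ ^ 2 ∈ upperBounds E := by
    rintro _ ⟨A, -, hA, rfl⟩
    calc ‖⟪x, Φ A⟫_𝕜‖ ^ 2 ≤ (‖x‖ * ‖Φ A‖) ^ 2 := by gcongr; exact norm_inner_le_norm _ _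
      _ = ‖x‖ ^ 2 * ‖Φ A‖ ^ 2 := mul_pow _ _ _
      _ ≤ ‖x‖ ^ 2 := mul_le_of_le_one_right (by positivity) hA
  obtain ⟨i⟩ := l.nonempty_of_neBot
  exact IsLUB.csSup_eq ⟨hub, fun b hb => le_of_tendsto' hlim fun i => hb (hmem i)⟩ ⟨_, hmem i⟩

end InnerProductSpace

section FinsetProj

variable {𝕜 E ι : Type*} [RCLike 𝕜] [NormedAddCommGroup E] [InnerProductSpace 𝕜 E]

variable (𝕜) in
def finsetProj (v : ι → E) (F : Finset ι) : E →L[𝕜] E :=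
  ∑ i ∈ F, (innerSL 𝕜 (v i)).smulRight (v i)

variable {v : ι → E} {F : Finset ι}

theorem finsetProj_apply (x : E) : finsetProj 𝕜 v F x = ∑ i ∈ F, ⟪v i, x⟫_𝕜 • v i := by
  simp [finsetProj]

theorem inner_finsetProj_self (x : E) :
    ⟪x, finsetProj 𝕜 v F x⟫_𝕜 = ∑ i ∈ F, (‖⟪v i, x⟫_𝕜‖ : 𝕜) ^ 2 := by
  rw [finsetProj_apply, inner_sum]
  refine Finset.sum_congr rfl fun i _ => ?_
  rw [inner_smul_right, ← inner_conj_symm, RCLike.conj_mul, RCLike.norm_conj]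

theorem inner_finsetProj_finsetProj (hv : Orthonormal 𝕜 v) (x : E) :
    ⟪finsetProj 𝕜 v F x, finsetProj 𝕜 v F x⟫_𝕜 = ∑ i ∈ F, (‖⟪v i, x⟫_𝕜‖ : 𝕜) ^ 2 := by
  rw [finsetProj_apply, hv.inner_sum]
  exact Finset.sum_congr rfl fun i _ => RCLike.conj_mul _

theorem norm_finsetProj_sq (hv : Orthonormal 𝕜 v) (x : E) :
    ‖finsetProj 𝕜 v F x‖ ^ 2 = ∑ i ∈ F, ‖⟪v i, x⟫_𝕜‖ ^ 2 := by
  have h := inner_finsetProj_finsetProj (F := F) hv x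
  rw [inner_self_eq_norm_sq_to_K] at h
  exact_mod_cast h

theorem range_finsetProj_le :
    LinearMap.range (finsetProj 𝕜 v F : E →ₗ[𝕜] E) ≤ Submodule.span 𝕜 (v '' F) := by
  rintro _ ⟨x, rfl⟩
  rw [ContinuousLinearMap.coe_coe, finsetProj_apply]
  exact Submodule.sum_mem _ fun i hi =>
    Submodule.smul_mem _ _ (Submodule.subset_span ⟨i, hi, rfl⟩)

end FinsetProj

theorem IsFiniteRank.smul {E : Type*} [NormedAddCommGroup E] [InnerProductSpace ℂ E]
    {A : E →L[ℂ] E} (c : ℂ) (hA : IsFiniteRank E A) : IsFiniteRank E (c • A) :=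
  have : FiniteDimensional ℂ (LinearMap.range (A : E →ₗ[ℂ] E)) := hA
  Submodule.finiteDimensional_of_le (LinearMap.range_smul_le_range (A : E →ₗ[ℂ] E) c)

theorem isFiniteRank_finsetProj_mul {E ι : Type*} [NormedAddCommGroup E] [InnerProductSpace ℂ E]
    (v : ι → E) (F : Finset ι) (X : E →L[ℂ] E) : IsFiniteRank E (finsetProj ℂ v F * X) := by
  have : FiniteDimensional ℂ (Submodule.span ℂ (v '' F)) :=
    FiniteDimensional.span_of_finite ℂ (F.finite_toSet.image _)
  exact Submodule.finiteDimensional_of_le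
    ((LinearMap.range_comp_le_range _ _).trans range_finsetProj_le)

variable {H}

namespace IsHilbertSchmidt

variable {B : H →L[ℂ] H}

def toLp (hB : IsHilbertSchmidt H B) : lp (fun _ : stdIdx H => H) 2 :=
  ⟨fun i => B (stdBasis H i), memℓp_gen <| by simpa only [ENNReal.toReal_ofNat, Real.rpow_two]⟩

@[simp]
theorem toLp_apply (hB : IsHilbertSchmidt H B) (i : stdIdx H) : hB.toLp i = B (stdBasis H i) :=
  rfl

theorem norm_toLp_sq (hB : IsHilbertSchmidt H B) :
    ‖hB.toLp‖ ^ 2 = ∑' i, ‖B (stdBasis H i)‖ ^ 2 := by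
  simpa using lp.norm_rpow_eq_tsum (p := 2) (by norm_num) hB.toLp

theorem mul_left (hB : IsHilbertSchmidt H B) (A : H →L[ℂ] H) : IsHilbertSchmidt H (A * B) := by
  refine .of_nonneg_of_le (fun i => by positivity) (fun i => ?_) (Summable.mul_left (‖A‖ ^ 2) hB)
  rw [mul_apply_eq_comp, ← mul_pow]
  exact pow_le_pow_left₀ (norm_nonneg _) (A.le_opNorm _) 2

theorem star (hB : IsHilbertSchmidt H B) : IsHilbertSchmidt H (Star.star B) := by
  refine ((stdBasis H).summable_norm_sq_inner_prod hB).prod_symm.prod.congr fun i => ?_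
  rw [← (stdBasis H).hasSum_norm_sq_inner ((Star.star B) (stdBasis H i)) |>.tsum_eq]
  refine tsum_congr fun j => ?_
  rw [ContinuousLinearMap.star_eq_adjoint, ← ContinuousLinearMap.adjoint_inner_left,
    norm_inner_symm]
  rfl

def mulLeftToLp {T : H →L[ℂ] H} (hT : IsHilbertSchmidt H T) :
    (H →L[ℂ] H) →ₗ[ℂ] lp (fun _ : stdIdx H => H) 2 where
  toFun A := (hT.mul_left A).toLp
  map_add' A B := lp.ext <| funext fun i => by simp [add_mul]
  map_smul' c A := lp.ext <| funext fun i => by simp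

@[simp]
theorem mulLeftToLp_apply {T : H →L[ℂ] H} (hT : IsHilbertSchmidt H T)
    (A : H →L[ℂ] H) (i : stdIdx H) : hT.mulLeftToLp A i = A (T (stdBasis H i)) :=
  rfl

theorem norm_mulLeftToLp_sq {T : H →L[ℂ] H} (hT : IsHilbertSchmidt H T)
    (A : H →L[ℂ] H) : ‖hT.mulLeftToLp A‖ ^ 2 = ∑' i, ‖A (T (stdBasis H i))‖ ^ 2 :=
  (hT.mul_left A).norm_toLp_sq

end IsHilbertSchmidt

theorem trace_mul_comm {B C : H →L[ℂ] H} (hB : IsHilbertSchmidt H B) (hC : IsHilbertSchmidt H C) :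
    trace H (B * C) = trace H (C * B) := by
  set e := stdBasis H
  set a : stdIdx H → stdIdx H → ℂ := fun i j => ⟪e i, B (e j)⟫_ℂ * ⟪e j, C (e i)⟫_ℂ
  have hrow (i : stdIdx H) : ⟪e i, (B * C) (e i)⟫_ℂ = ∑' j, a i j := by
    rw [mul_apply_eq_comp, ← ContinuousLinearMap.adjoint_inner_left,
      ← e.tsum_inner_mul_inner]
    simp only [ContinuousLinearMap.adjoint_inner_left, a]
  have hcol (j : stdIdx H) : ⟪e j, (C * B) (e j)⟫_ℂ = ∑' i, a i j := by
    rw [mul_apply_eq_comp, ← ContinuousLinearMap.adjoint_inner_left,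
      ← e.tsum_inner_mul_inner]
    simp only [ContinuousLinearMap.adjoint_inner_left, a, mul_comm]
  have hsum : Summable (Function.uncurry a) := by
    refine .of_norm_bounded ((((e.summable_norm_sq_inner_prod hB).prod_symm).add
      (e.summable_norm_sq_inner_prod hC)).div_const 2) fun p => ?_
    change ‖a p.1 p.2‖ ≤ (‖⟪e p.1, B (e p.2)⟫_ℂ‖ ^ 2 + ‖⟪e p.2, C (e p.1)⟫_ℂ‖ ^ 2) / 2
    rw [norm_mul, le_div_iff₀ two_pos]
    nlinarith [two_mul_le_add_sq ‖⟪e p.1, B (e p.2)⟫_ℂ‖ ‖⟪e p.2, C (e p.1)⟫_ℂ‖]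
  calc trace H (B * C) = ∑' i, ∑' j, a i j := tsum_congr hrow
    _ = ∑' j, ∑' i, a i j := hsum.tsum_comm.symm
    _ = trace H (C * B) := (tsum_congr hcol).symm

theorem inner_mul_self_apply_of_isSelfAdjoint {T : H →L[ℂ] H} (hT : IsSelfAdjoint T) (x : H) :
    ⟪x, (T * T) x⟫_ℂ = ⟪T x, T x⟫_ℂ := by
  rw [mul_apply_eq_comp, ← ContinuousLinearMap.adjoint_inner_left, hT.adjoint_eq]

theorem IsTraceClass.isHilbertSchmidt_sqrt {S : H →L[ℂ] H} (hStc : IsTraceClass H S)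
    (hS : S.IsPositive) : IsHilbertSchmidt H (CFC.sqrt S) := by
  obtain ⟨B, C, hB, hC, hSBC⟩ := hStc
  set T := CFC.sqrt S
  have hT : IsSelfAdjoint T := .of_nonneg (CFC.sqrt_nonneg _)
  have hTT : T * T = S :=
    CFC.sqrt_mul_sqrt_self _ ((ContinuousLinearMap.nonneg_iff_isPositive _).mpr hS)
  rw [IsHilbertSchmidt, ← Complex.summable_ofReal]
  refine (lp.summable_inner hB.star.toLp hC.toLp).congr fun i => ?_
  rw [IsHilbertSchmidt.toLp_apply, IsHilbertSchmidt.toLp_apply,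
    ContinuousLinearMap.star_eq_adjoint, ContinuousLinearMap.adjoint_inner_left,
    ← mul_apply_eq_comp, ← hSBC, ← hTT, inner_mul_self_apply_of_isSelfAdjoint hT,
    inner_self_eq_norm_sq_to_K]
  norm_cast

theorem trace_star_mul_mul_mul_self {T : H →L[ℂ] H} (hTsa : IsSelfAdjoint T)
    (hT : IsHilbertSchmidt H T) (M A : H →L[ℂ] H) :
    trace H (star M * A * (T * T)) = ⟪hT.mulLeftToLp M, hT.mulLeftToLp A⟫_ℂ := by
  rw [← mul_assoc, trace_mul_comm (hT.mul_left _) hT, lp.inner_eq_tsum]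
  refine tsum_congr fun i => ?_
  rw [mul_apply_eq_comp, ← ContinuousLinearMap.adjoint_inner_left, hTsa.adjoint_eq]
  simp only [mul_apply_eq_comp, IsHilbertSchmidt.mulLeftToLp_apply,
    ContinuousLinearMap.star_eq_adjoint, ContinuousLinearMap.adjoint_inner_right]

theorem inner_mulLeftToLp_finsetProj_mul {T : H →L[ℂ] H} (hT : IsHilbertSchmidt H T)
    (F : Finset (stdIdx H)) (X : H →L[ℂ] H) :
    ⟪hT.mulLeftToLp X, hT.mulLeftToLp (finsetProj ℂ (stdBasis H) F * X)⟫_ℂ =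
      ⟪hT.mulLeftToLp (finsetProj ℂ (stdBasis H) F * X),
        hT.mulLeftToLp (finsetProj ℂ (stdBasis H) F * X)⟫_ℂ := by
  rw [lp.inner_eq_tsum, lp.inner_eq_tsum]
  refine tsum_congr fun i => ?_
  simp only [IsHilbertSchmidt.mulLeftToLp_apply, mul_apply_eq_comp]
  rw [inner_finsetProj_self, inner_finsetProj_finsetProj (stdBasis H).orthonormal]

theorem tendsto_norm_mulLeftToLp_finsetProj_mul_sq {T : H →L[ℂ] H} (hT : IsHilbertSchmidt H T)
    (X : H →L[ℂ] H) :
    Tendsto (fun F => ‖hT.mulLeftToLp (finsetProj ℂ (stdBasis H) F * X)‖ ^ 2) atTop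
      (𝓝 (‖hT.mulLeftToLp X‖ ^ 2)) := by
  simp only [IsHilbertSchmidt.norm_mulLeftToLp_sq, mul_apply_eq_comp,
    norm_finsetProj_sq (stdBasis H).orthonormal]
  exact (stdBasis H).tendsto_tsum_sum_norm_sq_inner (hT.mul_left X)

variable (H)

/-- for positive trace class `S` and any bounded `X`,
`trace(X⋆ X S) = sup { |trace(X⋆ A S)|² : A finite rank, trace(A⋆ A S) ≤ 1 }`. -/
theorem stmt19 (S : H →L[ℂ] H) (hS : S.IsPositive) (hStc : IsTraceClass H S)
    (X : H →L[ℂ] H) :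
    trace H (star X * X * S) = ↑(sSup {r : ℝ | ∃ A : H →L[ℂ] H, IsFiniteRank H A ∧
      trace H (star A * A * S) ≤ 1 ∧
      r = ‖trace H (star X * A * S)‖ ^ 2}) := by
  set T := CFC.sqrt S
  have hTT : T * T = S :=
    CFC.sqrt_mul_sqrt_self _ ((ContinuousLinearMap.nonneg_iff_isPositive _).mpr hS)
  have hT : IsHilbertSchmidt H T := hStc.isHilbertSchmidt_sqrt hS
  set Φ := hT.mulLeftToLp
  have htrace (M A : H →L[ℂ] H) : trace H (star M * A * S) = ⟪Φ M, Φ A⟫_ℂ := by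
    rw [← hTT]; exact trace_star_mul_mul_mul_self (.of_nonneg (CFC.sqrt_nonneg S)) hT M A
  have hnorm (A : H →L[ℂ] H) : trace H (star A * A * S) = ((‖Φ A‖ ^ 2 : ℝ) : ℂ) := by
    rw [htrace, inner_self_eq_norm_sq_to_K]; norm_cast
  simp only [hnorm, htrace, ← Complex.ofReal_one, Complex.real_le_real]
  rw [sSup_norm_inner_sq_eq Φ (fun c _ hA => hA.smul c) (Φ X) (l := atTop)
    (fun F => isFiniteRank_finsetProj_mul (stdBasis H) F X)
    (inner_mulLeftToLp_finsetProj_mul hT · X) (tendsto_norm_mulLeftToLp_finsetProj_mul_sq hT X)]
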